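/- arXiv:2305.12306 — 11 statements merged into one kernel-verified Lean document; each statement's English description precedes it below -/
import Mathlib

section
/- Let t, s ∈ ℂ and let P be a 2×2 complex matrix with det P = 1. Then for all vectors x, y ∈ ℂ², one has A(P·x, P·y, (t,s)) = P * A(x, y, (t,s)) * P⁻¹ and e(P·x, P·y) = e(x, y), where P·x denotes the usual matrix–vector product. In other words, the pullback under the parametrization ι_{(t,s)} of the conjugation action of SL(2,ℂ) on the quadric Q_t is the diagonal Möbius action on ℙ¹ × ℙ¹, independently of (t,s). -/
/-- The matrix `A(x, y, (t,s))` of the parametrization `ι_{(t,s)}` of the quadric `Q_t`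
in the projective compactification of `SL(2,ℂ)`. -/
noncomputable def Amat (t s : ℂ) (x y : Fin 2 → ℂ) : Matrix (Fin 2) (Fin 2) ℂ :=
  !![(t - s) / 2 * (x 1 * y 0) - (t + s) / 2 * (x 0 * y 1), s * (x 0 * y 0);
     -(s * (x 1 * y 1)), (t + s) / 2 * (x 1 * y 0) - (t - s) / 2 * (x 0 * y 1)]

/-- The scalar `e(x, y) = x₂y₁ − x₁y₂`. -/
def eFun (x y : Fin 2 → ℂ) : ℂ := x 1 * y 0 - x 0 * y 1

/-!
With `J = !![0, 1; -1, 0]`, both objects are built from the symplectic form `yᵀ J x`: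
`e(x, y) = yᵀ J x` and `A(x, y) = s • x yᵀ J + β₂ e(x, y) • 1`. Every `2 × 2` matrix satisfies
`Pᵀ J P = det P • J`, so for `det P = 1` the form is `P`-invariant and `Pᵀ J = J P⁻¹`; hence
`(P x)(P y)ᵀ J = P (x yᵀ J) P⁻¹`, while the scalar part commutes with conjugation.
-/

open Matrix

section CommRing

variable {R : Type*} [CommRing R]

def symplecticJ : Matrix (Fin 2) (Fin 2) R := !![0, 1; -1, 0]

theorem transpose_mul_symplecticJ_mul (P : Matrix (Fin 2) (Fin 2) R) :
    Pᵀ * symplecticJ * P = P.det • symplecticJ := by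
  ext i j
  fin_cases i <;> fin_cases j <;>
    simp [symplecticJ, det_fin_two, mul_apply, Fin.sum_univ_two] <;> ring

theorem transpose_mul_symplecticJ_of_det_eq_one {P : Matrix (Fin 2) (Fin 2) R}
    (hP : P.det = 1) : Pᵀ * symplecticJ = symplecticJ * P⁻¹ := by
  have hPu : IsUnit P.det := hP ▸ isUnit_one
  calc Pᵀ * symplecticJ = Pᵀ * symplecticJ * P * P⁻¹ :=
        (mul_nonsing_inv_cancel_right _ _ hPu).symm
    _ = symplecticJ * P⁻¹ := by rw [transpose_mul_symplecticJ_mul, hP, one_smul]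

theorem vecMulVec_mulVec_mulVec {n : Type*} [Fintype n] (P : Matrix n n R) (x y : n → R) :
    vecMulVec (P *ᵥ x) (P *ᵥ y) = P * vecMulVec x y * Pᵀ := by
  rw [mul_vecMulVec, vecMulVec_mul, vecMul_transpose]

end CommRing

theorem eFun_eq_vecMul_symplecticJ_dotProduct (x y : Fin 2 → ℂ) :
    eFun x y = (y ᵥ* symplecticJ) ⬝ᵥ x := by
  simp [eFun, symplecticJ, vecMul, dotProduct, Fin.sum_univ_two]
  ring

theorem Amat_eq_smul_vecMulVec_mul_symplecticJ_add (t s : ℂ) (x y : Fin 2 → ℂ) :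
    Amat t s x y = s • (vecMulVec x y * symplecticJ) + ((t - s) / 2 * eFun x y) • 1 := by
  ext i j
  fin_cases i <;> fin_cases j <;>
    simp [Amat, eFun, symplecticJ, mul_apply, vecMulVec_apply, Fin.sum_univ_two] <;> ring

theorem eFun_mulVec_mulVec {P : Matrix (Fin 2) (Fin 2) ℂ} (hP : P.det = 1) (x y : Fin 2 → ℂ) :
    eFun (P *ᵥ x) (P *ᵥ y) = eFun x y :=
  calc eFun (P *ᵥ x) (P *ᵥ y) = ((P *ᵥ y) ᵥ* symplecticJ) ⬝ᵥ (P *ᵥ x) :=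
        eFun_eq_vecMul_symplecticJ_dotProduct _ _
    _ = (y ᵥ* (Pᵀ * symplecticJ * P)) ⬝ᵥ x := by
        rw [dotProduct_mulVec, vecMul_mulVec, vecMul_vecMul]
    _ = eFun x y := by
        rw [transpose_mul_symplecticJ_mul, hP, one_smul, eFun_eq_vecMul_symplecticJ_dotProduct]

/-- The pullback under `ι_{(t,s)}` of the conjugation action of `SL(2,ℂ)` on `Q_t` is the
diagonal Möbius action on `ℙ¹ × ℙ¹`, independently of `(t,s)`:
`A(P·x, P·y, (t,s)) = P * A(x,y,(t,s)) * P⁻¹` and `e(P·x, P·y) = e(x,y)`. -/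
theorem Amat_mulVec_conj (t s : ℂ) (P : Matrix (Fin 2) (Fin 2) ℂ) (hP : P.det = 1)
    (x y : Fin 2 → ℂ) :
    Amat t s (P.mulVec x) (P.mulVec y) = P * Amat t s x y * P⁻¹ ∧
    eFun (P.mulVec x) (P.mulVec y) = eFun x y := by
  have hPu : IsUnit P.det := hP ▸ isUnit_one
  refine ⟨?_, eFun_mulVec_mulVec hP x y⟩
  rw [Amat_eq_smul_vecMulVec_mul_symplecticJ_add, Amat_eq_smul_vecMulVec_mul_symplecticJ_add,
    eFun_mulVec_mulVec hP, vecMulVec_mulVec_mulVec, Matrix.mul_assoc _ Pᵀ,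
    transpose_mul_symplecticJ_of_det_eq_one hP]
  simp only [Matrix.mul_add, Matrix.add_mul, Matrix.mul_smul, Matrix.smul_mul, Matrix.mul_one,
    mul_nonsing_inv _ hPu, Matrix.mul_assoc]
end

section
/- For all t, s ∈ ℂ and all x, y ∈ ℂ², the matrix A(x,y,(t,s)) has trace equal to t·e(x,y); and if moreover t² − s² = 4, then det A(x,y,(t,s)) = e(x,y)². Consequently, when t² − s² = 4 the parametrization ι_{(t,s)} takes values in the quadric surface Q_t = { [a:b:c:d:e] : ad − bc = e², a + d = t·e }. -/
theorem Amat_trace (t s : ℂ) (x y : Fin 2 → ℂ) : (Amat t s x y).trace = t * eFun x y := by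
  rw [Amat, Matrix.trace_fin_two_of, eFun]
  ring

/-- `det A = β₁β₂ · e²`, and `β₁β₂ = (t² − s²)/4`. -/
theorem Amat_det (t s : ℂ) (x y : Fin 2 → ℂ) :
    (Amat t s x y).det = (t ^ 2 - s ^ 2) / 4 * eFun x y ^ 2 := by
  rw [Amat, Matrix.det_fin_two_of, eFun]
  ring

/-- `tr A(x,y,(t,s)) = t·e(x,y)`, and if `t² − s² = 4` then `det A(x,y,(t,s)) = e(x,y)²`;
hence the parametrization `ι_{(t,s)}` takes values in the quadric
`Q_t = { [a:b:c:d:e] : ad − bc = e², a + d = t·e }`. -/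
theorem Amat_trace_det (t s : ℂ) (x y : Fin 2 → ℂ) :
    (Amat t s x y).trace = t * eFun x y ∧
    (t ^ 2 - s ^ 2 = 4 → (Amat t s x y).det = eFun x y ^ 2) := by
  refine ⟨Amat_trace t s x y, fun h => ?_⟩
  rw [Amat_det, h]
  norm_num
end

section
/- Let t, s ∈ ℂ with t real (conj t = t) and s purely imaginary (conj s = −s). Then for all x = (x₁,x₂), y = (y₁,y₂) ∈ ℂ², A((ȳ₁, ȳ₂), (x̄₁, x̄₂), (t,s)) = −conj(A(x, y, (t,s))), where conj denotes entrywise complex conjugation of the matrix and bars denote complex conjugation. Consequently, the twisted anti-holomorphic involution τ̃(p,q) = (τ(q), τ(p)) on ℙ¹ × ℙ¹ (with τ[x₁:x₂] = [x̄₁:x̄₂]) covers, via the parametrization ι_{(t,s)}, the entrywise complex conjugation on the quadric Q_t. -/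
/-! Conjugation takes `A(x, y, (t,s))` to `A(x̄, ȳ, (t,−s))`, and swapping the two points
together with `s ↦ −s` negates `A`; composing the two gives the theorem. -/

theorem Amat_map_ringHom (f : ℂ →+* ℂ) (t s : ℂ) (x y : Fin 2 → ℂ) :
    (Amat t s x y).map f = Amat (f t) (f s) (f ∘ x) (f ∘ y) := by
  ext i j
  fin_cases i <;> fin_cases j <;> simp [Amat, map_ofNat]

theorem Amat_swap_neg (t s : ℂ) (x y : Fin 2 → ℂ) :
    Amat t (-s) y x = -Amat t s x y := by
  ext i j
  fin_cases i <;> fin_cases j <;>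
    simp only [Amat, Matrix.of_apply, Matrix.neg_apply, Matrix.cons_val', Matrix.cons_val_zero,
      Matrix.cons_val_one, Matrix.cons_val_fin_one, Fin.zero_eta, Fin.mk_one] <;> ring

/-- For `t` real and `s` purely imaginary,
`A((ȳ₁,ȳ₂), (x̄₁,x̄₂), (t,s)) = − conj(A(x,y,(t,s)))`: the twisted anti-holomorphic
involution `τ̃(p,q) = (τ(q), τ(p))` on `ℙ¹ × ℙ¹` covers, via `ι_{(t,s)}`, the entrywise
complex conjugation on the quadric `Q_t`. -/
theorem Amat_tau_conj (t s : ℂ) (htr : (starRingEnd ℂ) t = t) (hsi : (starRingEnd ℂ) s = -s)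
    (x y : Fin 2 → ℂ) :
    Amat t s ![(starRingEnd ℂ) (y 0), (starRingEnd ℂ) (y 1)]
        ![(starRingEnd ℂ) (x 0), (starRingEnd ℂ) (x 1)] =
      -(Amat t s x y).map (starRingEnd ℂ) := by
  -- `FinVec.map f v` unfolds definitionally to `![f (v 0), f (v 1)]`.
  change Amat t s (FinVec.map _ y) (FinVec.map _ x) = _
  rw [FinVec.map_eq, FinVec.map_eq, Amat_map_ringHom, htr, hsi, Amat_swap_neg, neg_neg]
end

section
/- Let t ∈ ℝ with |t| < 2, let s = i·√(4 − t²), and let x = (x₁,x₂) ∈ ℂ² be nonzero. Then e(x, (x̄₂, −x̄₁)) = |x₁|² + |x₂|², and the normalized matrix M := (|x₁|² + |x₂|²)⁻¹ · A(x, (x̄₂, −x̄₁), (t,s)) lies in the special unitary group SU(2) (i.e., M*·M = I and det M = 1) and has trace equal to t. Explicitly, M = (|x₁|²+|x₂|²)⁻¹ · [[ (t/2)(|x₁|²+|x₂|²) + (s/2)(|x₁|²−|x₂|²), s·x₁x̄₂ ], [ s·x₂x̄₁, (t/2)(|x₁|²+|x₂|²) + (s/2)(|x₂|²−|x₁|²)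 ]]. -/
section

open Complex ComplexConjugate Matrix

def quatMat (α β : ℂ) : Matrix (Fin 2) (Fin 2) ℂ := !![α, β; -conj β, conj α]

theorem star_quatMat (α β : ℂ) : star (quatMat α β) = adjugate (quatMat α β) := by
  rw [quatMat, adjugate_fin_two_of]
  ext i j
  fin_cases i <;> fin_cases j <;> simp

theorem star_quatMat_mul_self (α β : ℂ) :
    star (quatMat α β) * quatMat α β = (quatMat α β).det • 1 := by
  rw [star_quatMat, adjugate_mul]

theorem det_quatMat (α β : ℂ) : (quatMat α β).det = ((normSq α + normSq β : ℝ) : ℂ) := by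
  simp only [quatMat, det_fin_two_of, ofReal_add, ← mul_conj]
  ring

theorem trace_quatMat (α β : ℂ) : (quatMat α β).trace = 2 * α.re := by
  simp only [quatMat, trace_fin_two_of, add_conj]
  push_cast
  ring

theorem ofReal_smul_quatMat (r : ℝ) (α β : ℂ) :
    (r : ℂ) • quatMat α β = quatMat (r * α) (r * β) := by
  ext i j
  fin_cases i <;> fin_cases j <;> simp [quatMat]

theorem eFun_conjSwap (x : Fin 2 → ℂ) :
    eFun x ![conj (x 1), -conj (x 0)] = ((normSq (x 0) + normSq (x 1) : ℝ) : ℂ) := by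
  simp only [eFun, cons_val_zero, cons_val_one, cons_val_fin_one, ofReal_add, ← mul_conj]
  ring

theorem Amat_conjSwap (t s : ℂ) (x : Fin 2 → ℂ) :
    Amat t s x ![conj (x 1), -conj (x 0)] =
      !![t / 2 * ((normSq (x 0) + normSq (x 1) : ℝ) : ℂ) +
            s / 2 * ((normSq (x 0) : ℂ) - (normSq (x 1) : ℂ)),
          s * (x 0 * conj (x 1));
          s * (x 1 * conj (x 0)),
          t / 2 * ((normSq (x 0) + normSq (x 1) : ℝ) : ℂ) +
            s / 2 * ((normSq (x 1) : ℂ) - (normSq (x 0) : ℂ))] := by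
  ext i j
  fin_cases i <;> fin_cases j <;>
    simp only [Amat, ofReal_add, ← mul_conj, of_apply, cons_val', cons_val_zero, cons_val_one,
      cons_val_fin_one, empty_val', Fin.zero_eta, Fin.mk_one] <;> ring

theorem Amat_conjSwap_eq_quatMat (t σ : ℝ) (x : Fin 2 → ℂ) :
    Amat t (I * σ) x ![conj (x 1), -conj (x 0)] =
      quatMat (((t * (normSq (x 0) + normSq (x 1)) / 2 : ℝ) : ℂ) +
          ((σ * (normSq (x 0) - normSq (x 1)) / 2 : ℝ) : ℂ) * I)
        (I * σ * (x 0 * conj (x 1))) := by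
  rw [Amat_conjSwap]
  ext i j
  fin_cases i <;> fin_cases j <;>
    simp only [quatMat, of_apply, cons_val', cons_val_zero, cons_val_one, cons_val_fin_one,
      empty_val', Fin.zero_eta, Fin.mk_one, map_add, map_mul, conj_ofReal, conj_I,
      conj_conj] <;> push_cast <;> ring

theorem normSq_add_normSq_of_sq_add_sq_eq_four {t σ : ℝ} (h : t ^ 2 + σ ^ 2 = 4)
    (x : Fin 2 → ℂ) :
    normSq (((t * (normSq (x 0) + normSq (x 1)) / 2 : ℝ) : ℂ) +
          ((σ * (normSq (x 0) - normSq (x 1)) / 2 : ℝ) : ℂ) * I) +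
        normSq (I * σ * (x 0 * conj (x 1))) = (normSq (x 0) + normSq (x 1)) ^ 2 := by
  simp only [normSq_add_mul_I, map_mul, normSq_I, normSq_ofReal, normSq_conj]
  linear_combination (normSq (x 0) + normSq (x 1)) ^ 2 / 4 * h

theorem normSq_add_normSq_ne_zero {x : Fin 2 → ℂ} (hx : x ≠ 0) :
    normSq (x 0) + normSq (x 1) ≠ 0 := by
  contrapose! hx
  obtain ⟨h0, h1⟩ := (add_eq_zero_iff_of_nonneg (normSq_nonneg _) (normSq_nonneg _)).1 hx
  ext i
  fin_cases i
  exacts [normSq_eq_zero.1 h0, normSq_eq_zero.1 h1]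

end

/-- For real `t` with `|t| < 2`, `s = i√(4 − t²)`, and `x ≠ 0`:
`e(x, (x̄₂,−x̄₁)) = |x₁|² + |x₂|²`, and the normalized matrix
`M = (|x₁|²+|x₂|²)⁻¹ · A(x, (x̄₂,−x̄₁), (t,s))` lies in `SU(2)` (i.e. `M*M = 1`,
`det M = 1`) with `tr M = t`, and is given by the stated explicit formula. -/
theorem Amat_su2_param (t : ℝ) (ht : |t| < 2) (x : Fin 2 → ℂ) (hx : x ≠ 0) :
    let s : ℂ := Complex.I * (Real.sqrt (4 - t ^ 2) : ℂ)
    let n : ℝ := Complex.normSq (x 0) + Complex.normSq (x 1)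
    let M : Matrix (Fin 2) (Fin 2) ℂ :=
      ((n : ℂ))⁻¹ • Amat (t : ℂ) s x ![(starRingEnd ℂ) (x 1), -(starRingEnd ℂ) (x 0)]
    eFun x ![(starRingEnd ℂ) (x 1), -(starRingEnd ℂ) (x 0)] = (n : ℂ) ∧
    star M * M = 1 ∧ M.det = 1 ∧ M.trace = (t : ℂ) ∧
    M = ((n : ℂ))⁻¹ •
      !![(t : ℂ) / 2 * (n : ℂ) +
            s / 2 * ((Complex.normSq (x 0) : ℂ) - (Complex.normSq (x 1) : ℂ)),
          s * (x 0 * (starRingEnd ℂ) (x 1));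
          s * (x 1 * (starRingEnd ℂ) (x 0)),
          (t : ℂ) / 2 * (n : ℂ) +
            s / 2 * ((Complex.normSq (x 1) : ℂ) - (Complex.normSq (x 0) : ℂ))] := by
  intro s n M
  set σ := Real.sqrt (4 - t ^ 2)
  have hσ : t ^ 2 + σ ^ 2 = 4 := by
    rw [Real.sq_sqrt (by nlinarith [sq_abs t, abs_nonneg t])]
    ring
  have hn : n ≠ 0 := normSq_add_normSq_ne_zero hx
  set α : ℂ := ((t * n / 2 : ℝ) : ℂ) +
    ((σ * (Complex.normSq (x 0) - Complex.normSq (x 1)) / 2 : ℝ) : ℂ) * Complex.I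
  set β : ℂ := Complex.I * σ * (x 0 * (starRingEnd ℂ) (x 1))
  have hM : M = quatMat (n⁻¹ * α) (n⁻¹ * β) := by
    rw [← ofReal_smul_quatMat, ← Amat_conjSwap_eq_quatMat, Complex.ofReal_inv]
  have hunit : Complex.normSq (n⁻¹ * α) + Complex.normSq (n⁻¹ * β) = 1 := by
    have hαβ : Complex.normSq α + Complex.normSq β = n ^ 2 :=
      normSq_add_normSq_of_sq_add_sq_eq_four hσ x
    simp only [Complex.normSq_mul, Complex.normSq_ofReal, ← mul_add, hαβ]
    field_simp
  refine ⟨eFun_conjSwap x, ?_, ?_, ?_, congrArg ((n : ℂ)⁻¹ • ·) (Amat_conjSwap t s x)⟩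
  · rw [hM, star_quatMat_mul_self, det_quatMat, hunit, Complex.ofReal_one, one_smul]
  · rw [hM, det_quatMat, hunit, Complex.ofReal_one]
  · rw [hM, trace_quatMat, Complex.re_ofReal_mul, Complex.add_re, Complex.ofReal_re,
      Complex.re_ofReal_mul, Complex.I_re, mul_zero, add_zero]
    norm_cast
    field_simp
end

section
/- Let t ∈ ℝ with |t| < 2, set y₀ = √(4 − t²) and s = i·y₀, let x = (x₁,x₂) ∈ ℂ², and set z = x₂·x̄₁. Then (1/i)·A(x, (x̄₁, x̄₂), (t,s)) equals the matrix with rows (t·Im z − y₀·Re z, y₀·|x₁|²) and (−y₀·|x₂|², t·Im z + y₀·Re z); in particular all its entries are real, its determinant equals 4·(Im z)², and its trace equals 2t·Im z. Consequently, whenever Im z ≠ 0, the matrix (1/(2·Im z))·(1/i)·A(x, (x̄₁,x̄₂), (t,s)) lies in SL(2,ℝ) and has trace t. -/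
/-! Writing `z = x₂ x̄₁`, the entries of `A(x, x̄, (t, i y))` are `i` times real numbers built from
`Re z`, `Im z`, `|x₁|²`, `|x₂|²`. The determinant of the resulting real matrix is
`t² (Im z)² − y² (Re z)² + y² |x₁|² |x₂|²`, and `|x₁|² |x₂|² = |z|² = (Re z)² + (Im z)²` collapses it
to `(t² + y²) (Im z)²`, and `t² + y₀² = 4` for `y₀ = √(4 − t²)`, `|t| < 2`. -/

theorem Amat_conj_eq_map_ofReal (t y : ℝ) (x : Fin 2 → ℂ) :
    let z : ℂ := x 1 * (starRingEnd ℂ) (x 0)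
    (Complex.I)⁻¹ • Amat (t : ℂ) (Complex.I * (y : ℂ)) x
        ![(starRingEnd ℂ) (x 0), (starRingEnd ℂ) (x 1)] =
      (!![t * z.im - y * z.re, y * Complex.normSq (x 0);
          -(y * Complex.normSq (x 1)), t * z.im + y * z.re]).map Complex.ofReal := by
  intro z
  ext i j
  fin_cases i <;> fin_cases j <;>
    simp [Amat, z, Complex.ext_iff, Complex.normSq_apply] <;> ring_nf <;> simp

theorem Complex.re_sq_add_im_sq_mul_conj (u v : ℂ) :
    (u * (starRingEnd ℂ) v).re ^ 2 + (u * (starRingEnd ℂ) v).im ^ 2 =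
      Complex.normSq v * Complex.normSq u := by
  rw [← Complex.normSq_add_mul_I, Complex.re_add_im, Complex.normSq_mul,
    Complex.normSq_conj, mul_comm]

theorem Matrix.det_fin_two_of_mul_eq_re_sq_add_im_sq {t y a b p q : ℝ}
    (hpq : p * q = a ^ 2 + b ^ 2) :
    (!![t * b - y * a, y * p; -(y * q), t * b + y * a]).det = (t ^ 2 + y ^ 2) * b ^ 2 := by
  rw [Matrix.det_fin_two_of]
  linear_combination y ^ 2 * hpq

theorem Matrix.det_trace_smul_inv_of_det_eq_sq {M : Matrix (Fin 2) (Fin 2) ℝ} {t b : ℝ}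
    (hdet : M.det = 4 * b ^ 2) (htr : M.trace = 2 * t * b) (hb : b ≠ 0) :
    ((1 / (2 * b)) • M).det = 1 ∧ ((1 / (2 * b)) • M).trace = t := by
  rw [Matrix.det_smul, Matrix.trace_smul, hdet, htr, Fintype.card_fin, smul_eq_mul]
  constructor
  · field_simp
    ring
  · field_simp

theorem sq_add_sqrt_four_sub_sq {t : ℝ} (ht : |t| < 2) :
    t ^ 2 + Real.sqrt (4 - t ^ 2) ^ 2 = 4 := by
  have h : t ^ 2 < 4 := by nlinarith [sq_abs t, abs_nonneg t]
  rw [Real.sq_sqrt (by linarith)]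
  ring

/-- For real `t` with `|t| < 2`, `y₀ = √(4 − t²)`, `s = i·y₀`, and `z = x₂·x̄₁`:
`(1/i)·A(x, (x̄₁,x̄₂), (t,s))` is the real matrix with rows
`(t·Im z − y₀·Re z, y₀·|x₁|²)` and `(−y₀·|x₂|², t·Im z + y₀·Re z)`, which has determinant
`4(Im z)²` and trace `2t·Im z`; hence, when `Im z ≠ 0`, its normalization by `1/(2·Im z)`
lies in `SL(2,ℝ)` and has trace `t`. -/
theorem Amat_sl2R_param (t : ℝ) (ht : |t| < 2) (x : Fin 2 → ℂ) :
    let y₀ : ℝ := Real.sqrt (4 - t ^ 2)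
    let s : ℂ := Complex.I * (y₀ : ℂ)
    let z : ℂ := x 1 * (starRingEnd ℂ) (x 0)
    let N : Matrix (Fin 2) (Fin 2) ℝ :=
      !![t * z.im - y₀ * z.re, y₀ * Complex.normSq (x 0);
         -(y₀ * Complex.normSq (x 1)), t * z.im + y₀ * z.re]
    (Complex.I)⁻¹ • Amat (t : ℂ) s x ![(starRingEnd ℂ) (x 0), (starRingEnd ℂ) (x 1)] =
        N.map Complex.ofReal ∧
    N.det = 4 * z.im ^ 2 ∧
    N.trace = 2 * t * z.im ∧
    (z.im ≠ 0 →
      ((1 / (2 * z.im)) • N).det = 1 ∧ ((1 / (2 * z.im)) • N).trace = t) := by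
  intro y₀ s z N
  have hdet : N.det = 4 * z.im ^ 2 := by
    rw [Matrix.det_fin_two_of_mul_eq_re_sq_add_im_sq
      (Complex.re_sq_add_im_sq_mul_conj (x 1) (x 0)).symm, sq_add_sqrt_four_sub_sq ht]
  have htr : N.trace = 2 * t * z.im := by
    rw [Matrix.trace_fin_two_of]
    ring
  exact ⟨Amat_conj_eq_map_ofReal t y₀ x, hdet, htr,
    Matrix.det_trace_smul_inv_of_det_eq_sq hdet htr⟩
end

section
/- Let A₁, A₂, A₃ be 2×2 complex matrices of determinant 1. Set aᵢ = −tr(Aᵢ) for i = 1,2,3, a₄ = −tr(A₁A₂A₃), c₁₂ = −tr(A₁A₂), c₂₃ = −tr(A₂A₃), and c₁₃ = −tr(A₁A₃). Then c₁₂·c₂₃·c₁₃ = c₁₂² + c₂₃² + c₁₃² + (a₁a₂ + a₃a₄)·c₁₂ + (a₂a₃ + a₁a₄)·c₂₃ + (a₁a₃ + a₂a₄)·c₁₃ + a₁a₂a₃a₄ + a₁² + a₂² + a₃² + a₄² − 4. (This is the Fricke relation identifying the genus-zero 4-punctured SL(2,ℂ)-character variety with the Fricke–Klein family of affine cubic surfaces;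 the variables are the negative-trace coordinates coming from the skein algebra at A = −1.) -/
/-!
The traces `t = tr(A₁A₂A₃)` and `t' = tr(A₁A₃A₂)` have a sum and a product that are polynomials
in the six traces `tr Aᵢ`, `tr(AᵢAⱼ)` (identities valid for all `2 × 2` matrices, once the product
is weighted by determinants). Hence `t` is a root of the quadratic `X² - (t + t') X + t t'`, and
written in the coordinates `aᵢ`, `a₄ = -t`, `cᵢⱼ` this is the Fricke relation.
-/

namespace Matrix

variable {R : Type*} [CommRing R]

theorem trace_mul_mul_add_trace_mul_mul_fin_two (A B C : Matrix (Fin 2) (Fin 2) R) :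
    (A * B * C).trace + (A * C * B).trace =
      A.trace * (B * C).trace + B.trace * (A * C).trace + C.trace * (A * B).trace -
        A.trace * B.trace * C.trace := by
  simp only [trace_fin_two, mul_apply, Fin.sum_univ_two]
  ring

theorem trace_mul_mul_mul_trace_mul_mul_fin_two (A B C : Matrix (Fin 2) (Fin 2) R) :
    (A * B * C).trace * (A * C * B).trace =
      B.det * C.det * A.trace ^ 2 + A.det * C.det * B.trace ^ 2 + A.det * B.det * C.trace ^ 2 +
        C.det * (A * B).trace ^ 2 + B.det * (A * C).trace ^ 2 + A.det * (B * C).trace ^ 2 -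
        C.det * A.trace * B.trace * (A * B).trace - B.det * A.trace * C.trace * (A * C).trace -
        A.det * B.trace * C.trace * (B * C).trace + (A * B).trace * (A * C).trace * (B * C).trace -
        4 * A.det * B.det * C.det := by
  simp only [trace_fin_two, det_fin_two, mul_apply, Fin.sum_univ_two]
  ring

end Matrix

/-- The Fricke relation: for `A₁, A₂, A₃ ∈ SL(2,ℂ)`, the negative-trace coordinates
`aᵢ = −tr Aᵢ`, `a₄ = −tr(A₁A₂A₃)`, `c₁₂ = −tr(A₁A₂)`, `c₂₃ = −tr(A₂A₃)`,
`c₁₃ = −tr(A₁A₃)` satisfy the Fricke–Klein cubic relation identifying the genus-zero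
4-punctured `SL(2,ℂ)`-character variety with the Fricke–Klein family of affine cubic
surfaces. -/
theorem fricke_relation (A₁ A₂ A₃ : Matrix (Fin 2) (Fin 2) ℂ)
    (h1 : A₁.det = 1) (h2 : A₂.det = 1) (h3 : A₃.det = 1) :
    let a₁ := -A₁.trace
    let a₂ := -A₂.trace
    let a₃ := -A₃.trace
    let a₄ := -(A₁ * A₂ * A₃).trace
    let c₁₂ := -(A₁ * A₂).trace
    let c₂₃ := -(A₂ * A₃).trace
    let c₁₃ := -(A₁ * A₃).trace
    c₁₂ * c₂₃ * c₁₃ =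
      c₁₂ ^ 2 + c₂₃ ^ 2 + c₁₃ ^ 2 + (a₁ * a₂ + a₃ * a₄) * c₁₂ +
        (a₂ * a₃ + a₁ * a₄) * c₂₃ + (a₁ * a₃ + a₂ * a₄) * c₁₃ +
        a₁ * a₂ * a₃ * a₄ + a₁ ^ 2 + a₂ ^ 2 + a₃ ^ 2 + a₄ ^ 2 - 4 := by
  intro a₁ a₂ a₃ a₄ c₁₂ c₂₃ c₁₃
  have hsum := Matrix.trace_mul_mul_add_trace_mul_mul_fin_two A₁ A₂ A₃
  have hprod := Matrix.trace_mul_mul_mul_trace_mul_mul_fin_two A₁ A₂ A₃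
  rw [h1, h2, h3] at hprod
  linear_combination hprod - (A₁ * A₂ * A₃).trace * hsum
end

section
/- Let t, s ∈ ℂ with t² − s² = 4 and s ≠ 0. Let (a, b, c, d, e₀) ∈ ℂ⁵ be nonzero with a·d − b·c = e₀² and a + d = t·e₀. Then there exist nonzero vectors x, y ∈ ℂ² and a nonzero scalar λ ∈ ℂ such that λ·A(x, y, (t,s)) = [[a,b],[c,d]] and λ·e(x, y) = e₀. (This is the surjectivity part of the claim that ι_{(t,s)} identifies ℙ¹ × ℙ¹ with the smooth quadric surface Q_t for t ≠ ±2.) -/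
open Matrix

theorem Matrix.exists_vecMulVec_eq_of_det_eq_zero {K : Type*} [Field K]
    {M : Matrix (Fin 2) (Fin 2) K} (hM : M ≠ 0) (hdet : M.det = 0) :
    ∃ x y : Fin 2 → K, x ≠ 0 ∧ y ≠ 0 ∧ vecMulVec x y = M := by
  rw [M.eta_fin_two] at hM hdet ⊢
  rw [det_fin_two_of] at hdet
  by_cases h00 : M 0 0 = 0
  · by_cases h01 : M 0 1 = 0
    · refine ⟨![0, 1], ![M 1 0, M 1 1], fun h => by simpa using congrFun h 1,
        fun h => hM ?_, ?_⟩
      · have h0 := congrFun h 0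
        have h1 := congrFun h 1
        ext i j; fin_cases i <;> fin_cases j <;> simp_all
      · ext i j; fin_cases i <;> fin_cases j <;> simp [vecMulVec_apply, h00, h01]
    · have h10 : M 1 0 = 0 := by
        simpa [h00, h01] using hdet
      refine ⟨![M 0 1, M 1 1], ![0, 1], fun h => h01 (by simpa using congrFun h 0),
        fun h => by simpa using congrFun h 1, ?_⟩
      ext i j; fin_cases i <;> fin_cases j <;> simp [vecMulVec_apply, h00, h10]
  · refine ⟨![M 0 0, M 1 0], ![1, M 0 1 / M 0 0], fun h => h00 (by simpa using congrFun h 0),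
      fun h => by simpa using congrFun h 0, ?_⟩
    ext i j; fin_cases i <;> fin_cases j <;> simp [vecMulVec_apply]
    · field_simp
    · field_simp; linear_combination -hdet

section

variable {t s p q r u : ℂ} {x y : Fin 2 → ℂ}

theorem Amat_eq_of_vecMulVec_eq (hxy : vecMulVec x y = !![p, q; r, u]) :
    Amat t s x y = !![(t - s) / 2 * r - (t + s) / 2 * q, s * p;
      -(s * u), (t + s) / 2 * r - (t - s) / 2 * q] := by
  have h i j : x i * y j = !![p, q; r, u] i j := by rw [← hxy, vecMulVec_apply]
  simp [Amat, h]

theorem eFun_eq_of_vecMulVec_eq (hxy : vecMulVec x y = !![p, q; r, u]) : eFun x y = r - q := by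
  have h i j : x i * y j = !![p, q; r, u] i j := by rw [← hxy, vecMulVec_apply]
  simp [eFun, h]

end

/-- Surjectivity of the parametrization `ι_{(t,s)}` onto the quadric `Q_t` for `t ≠ ±2`:
every nonzero `(a,b,c,d,e₀)` with `ad − bc = e₀²` and `a + d = t·e₀` is, up to a nonzero
scalar, of the form `(A(x,y,(t,s)), e(x,y))` for some nonzero vectors `x, y ∈ ℂ²`. -/
theorem Amat_surjective_on_quadric (t s : ℂ) (h : t ^ 2 - s ^ 2 = 4) (hs : s ≠ 0)
    (a b c d e₀ : ℂ) (h0 : (a, b, c, d, e₀) ≠ (0, 0, 0, 0, 0))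
    (hdet : a * d - b * c = e₀ ^ 2) (htr : a + d = t * e₀) :
    ∃ (x y : Fin 2 → ℂ) (lam : ℂ), x ≠ 0 ∧ y ≠ 0 ∧ lam ≠ 0 ∧
      lam • Amat t s x y = !![a, b; c, d] ∧ lam * eFun x y = e₀ := by
  set N := !![b, d - (t + s) / 2 * e₀; d - (t - s) / 2 * e₀, -c]
  have hN : N ≠ 0 := by
    intro hN
    simp only [N, ← ext_iff, Fin.forall_fin_two, of_apply, cons_val', cons_val_fin_one,
      cons_val_zero, cons_val_one, Matrix.zero_apply, neg_eq_zero] at hN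
    obtain ⟨⟨hb, hP⟩, hR, hc⟩ := hN
    have hse : s * e₀ = 0 := by linear_combination hR - hP
    have he : e₀ = 0 := (mul_eq_zero.mp hse).resolve_left hs
    subst he
    exact h0 (by simp_all)
  have hNdet : N.det = 0 := by
    rw [det_fin_two_of]
    linear_combination hdet - d * htr - e₀ ^ 2 / 4 * h
  obtain ⟨x, y, hx, hy, hxy⟩ := exists_vecMulVec_eq_of_det_eq_zero hN hNdet
  have hA : Amat t s x y = s • !![a, b; c, d] := by
    rw [Amat_eq_of_vecMulVec_eq hxy]
    ext i j; fin_cases i <;> fin_cases j <;> simp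
    · linear_combination (-s) * htr
    · ring
  have he : eFun x y = s * e₀ := by
    rw [eFun_eq_of_vecMulVec_eq hxy]
    ring
  refine ⟨x, y, s⁻¹, hx, hy, inv_ne_zero hs, ?_, ?_⟩
  · rw [hA, smul_smul, inv_mul_cancel₀ hs, one_smul]
  · rw [he, inv_mul_cancel_left₀ hs]
end

section
/- Let t, s ∈ ℂ with s ≠ 0, and let x, y, x′, y′ ∈ ℂ² be nonzero vectors. Suppose λ ∈ ℂ is nonzero and A(x, y, (t,s)) = λ·A(x′, y′, (t,s)) and e(x, y) = λ·e(x′, y′). Then there exist nonzero scalars μ, ν ∈ ℂ with x = μ·x′ and y = ν·y′. (This is the injectivity-up-to-scalars part of the claim that ι_{(t,s)} identifies ℙ¹ × ℙ¹ with the quadric Q_t.) -/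
/-! The difference of the diagonal entries of `A(x,y,(t,s))` is `s·(x₂y₁ + x₁y₂)`, which together
with `e(x,y)` recovers `x₂y₁` and `x₁y₂`, while the off-diagonal entries are `±s·x₁y₁`, `±s·x₂y₂`.
So for `s ≠ 0` the two hypotheses say exactly that the rank-one matrices `x yᵀ` and `λ·x′y′ᵀ`
coincide, and a rank-one matrix determines its factors up to nonzero scalars. -/

namespace Matrix

variable {K m n : Type*} [Field K] {x x' : m → K} {y y' : n → K} {c : K}

lemma exists_left_eq_smul_of_vecMulVec_eq_smul (hx : x ≠ 0) {b : n} (hb : y b ≠ 0)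
    (h : vecMulVec x y = c • vecMulVec x' y') : ∃ μ : K, μ ≠ 0 ∧ x = μ • x' := by
  have hcol : x = (c * y' b / y b) • x' := by
    funext i
    have hib := congrFun (congrFun h i) b
    simp only [vecMulVec_apply, Matrix.smul_apply, smul_eq_mul] at hib
    simp only [Pi.smul_apply, smul_eq_mul]
    field_simp
    linear_combination hib
  refine ⟨_, fun hμ => hx ?_, hcol⟩
  rw [hcol, hμ, zero_smul]

lemma exists_eq_smul_of_vecMulVec_eq_smul (hx : x ≠ 0) (hy : y ≠ 0)
    (h : vecMulVec x y = c • vecMulVec x' y') :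
    (∃ μ : K, μ ≠ 0 ∧ x = μ • x') ∧ ∃ ν : K, ν ≠ 0 ∧ y = ν • y' := by
  obtain ⟨a, ha⟩ := Function.ne_iff.mp hx
  obtain ⟨b, hb⟩ := Function.ne_iff.mp hy
  have hT : vecMulVec y x = c • vecMulVec y' x' := by
    rw [← transpose_vecMulVec, h, transpose_smul, transpose_vecMulVec]
  exact ⟨exists_left_eq_smul_of_vecMulVec_eq_smul hx hb h,
    exists_left_eq_smul_of_vecMulVec_eq_smul hy ha hT⟩

end Matrix

open Matrix

lemma vecMulVec_eq_smul_of_Amat_eq_smul {t s lam : ℂ} (hs : s ≠ 0) {x y x' y' : Fin 2 → ℂ}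
    (hA : Amat t s x y = lam • Amat t s x' y') (he : eFun x y = lam * eFun x' y') :
    vecMulVec x y = lam • vecMulVec x' y' := by
  have h00 := congrFun (congrFun hA 0) 0
  have h01 := congrFun (congrFun hA 0) 1
  have h10 := congrFun (congrFun hA 1) 0
  have h11 := congrFun (congrFun hA 1) 1
  simp only [Amat, Matrix.smul_apply, of_apply, cons_val', cons_val_zero, cons_val_one,
    empty_val', cons_val_fin_one, smul_eq_mul] at h00 h01 h10 h11
  unfold eFun at he
  have hsum : x 1 * y 0 + x 0 * y 1 = lam * (x' 1 * y' 0 + x' 0 * y' 1) :=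
    mul_left_cancel₀ hs (by linear_combination h11 - h00)
  ext i j
  simp only [vecMulVec_apply, Matrix.smul_apply, smul_eq_mul]
  fin_cases i <;> fin_cases j <;> simp only [Fin.zero_eta, Fin.mk_one]
  · exact mul_left_cancel₀ hs (by linear_combination h01)
  · linear_combination (hsum - he) / 2
  · linear_combination (hsum + he) / 2
  · exact mul_left_cancel₀ hs (by linear_combination -h10)

theorem Amat_injective_up_to_scalars_general (t s : ℂ) (hs : s ≠ 0)
    (x y x' y' : Fin 2 → ℂ) (hx : x ≠ 0) (hy : y ≠ 0)
    (lam : ℂ)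
    (hA : Amat t s x y = lam • Amat t s x' y')
    (he : eFun x y = lam * eFun x' y') :
    ∃ μ ν : ℂ, μ ≠ 0 ∧ ν ≠ 0 ∧ x = μ • x' ∧ y = ν • y' := by
  obtain ⟨⟨μ, hμ, rfl⟩, ν, hν, rfl⟩ := exists_eq_smul_of_vecMulVec_eq_smul hx hy
    (vecMulVec_eq_smul_of_Amat_eq_smul hs hA he)
  exact ⟨μ, ν, hμ, hν, rfl, rfl⟩

/-- Injectivity up to scalars of the parametrization `ι_{(t,s)}` (for `s ≠ 0`): if
`A(x,y,(t,s)) = λ·A(x′,y′,(t,s))` and `e(x,y) = λ·e(x′,y′)` with `λ ≠ 0` and all vectors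
nonzero, then `x` and `x′` (resp. `y` and `y′`) differ by nonzero scalars. -/
theorem Amat_injective_up_to_scalars (t s : ℂ) (hs : s ≠ 0)
    (x y x' y' : Fin 2 → ℂ) (hx : x ≠ 0) (hy : y ≠ 0) (hx' : x' ≠ 0) (hy' : y' ≠ 0)
    (lam : ℂ) (hlam : lam ≠ 0)
    (hA : Amat t s x y = lam • Amat t s x' y')
    (he : eFun x y = lam * eFun x' y') :
    ∃ μ ν : ℂ, μ ≠ 0 ∧ ν ≠ 0 ∧ x = μ • x' ∧ y = ν • y' :=
  Amat_injective_up_to_scalars_general t s hs x y x' y' hx hy lam hA he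
end

section
/- Let t, s ∈ ℂ with t² − s² = 4, and let u, v′ ∈ ℂ. Define M(u, v′) to be the 2×2 matrix with rows (t·v′ − u, u² − s²·v′²) and (−1, t·v′ + u). Then det M(u, v′) = (2v′)², tr M(u, v′) = t·(2v′), and s·M(u, v′) = A((u − s·v′, 1), (u + s·v′, 1), (t,s)). In particular, M(u, v′) is a well-defined point of (the affine cone over) Q_t for all values of s, including the degenerate limit s = 0 (t = ±2): the parametrization ι extends over the blowup chart v = s·v′ to the fibers over t = ±2. -/
/-- The matrix `M(u, v')` of the blowup chart `v = s v'`. -/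
def blowupChartMatrix (t s u v' : ℂ) : Matrix (Fin 2) (Fin 2) ℂ :=
  !![t * v' - u, u ^ 2 - s ^ 2 * v' ^ 2; -1, t * v' + u]

section blowupChartMatrix

variable (t s u v' : ℂ)

theorem det_blowupChartMatrix :
    (blowupChartMatrix t s u v').det = (t ^ 2 - s ^ 2) * v' ^ 2 := by
  rw [blowupChartMatrix, Matrix.det_fin_two_of]
  ring

theorem trace_blowupChartMatrix :
    (blowupChartMatrix t s u v').trace = t * (2 * v') := by
  rw [blowupChartMatrix, Matrix.trace_fin_two_of]
  ring

theorem smul_blowupChartMatrix :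
    s • blowupChartMatrix t s u v' = Amat t s ![u - s * v', 1] ![u + s * v', 1] := by
  ext i j
  fin_cases i <;> fin_cases j <;>
    simp only [blowupChartMatrix, Amat, Fin.zero_eta, Fin.mk_one, Fin.isValue, Matrix.smul_apply,
      Matrix.of_apply, Matrix.cons_val', Matrix.cons_val_zero, Matrix.cons_val_one,
      Matrix.cons_val_fin_one, smul_eq_mul, one_mul, mul_one] <;>
    ring

end blowupChartMatrix

/-- The blowup-chart extension of the parametrization `ι` over `t = ±2`: for
`t² − s² = 4`, the matrix `M(u,v′) = [[t·v′ − u, u² − s²·v′²], [−1, t·v′ + u]]` satisfies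
`det M = (2v′)²`, `tr M = t·(2v′)`, and `s·M(u,v′) = A((u − s·v′, 1), (u + s·v′, 1), (t,s))`;
in particular `M(u,v′)` defines a point of (the affine cone over) `Q_t` for all values of
`s`, including the degenerate limit `s = 0` (`t = ±2`). -/
theorem blowup_chart_param (t s : ℂ) (h : t ^ 2 - s ^ 2 = 4) (u v' : ℂ) :
    let M : Matrix (Fin 2) (Fin 2) ℂ :=
      !![t * v' - u, u ^ 2 - s ^ 2 * v' ^ 2; -1, t * v' + u]
    M.det = (2 * v') ^ 2 ∧
    M.trace = t * (2 * v') ∧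
    s • M = Amat t s ![u - s * v', 1] ![u + s * v', 1] := by
  have hdet : (blowupChartMatrix t s u v').det = (2 * v') ^ 2 := by
    rw [det_blowupChartMatrix, h]
    ring
  exact ⟨hdet, trace_blowupChartMatrix t s u v', smul_blowupChartMatrix t s u v'⟩
end

section
/- Let t ∈ ℝ with |t| < 2 and set s = i·√(4 − t²). For every 2×2 complex matrix M in SU(2) (i.e., unitary of determinant 1) with tr(M) = t, there exists a nonzero vector x = (x₁,x₂) ∈ ℂ² such that M = (|x₁|² + |x₂|²)⁻¹ · A(x, (x̄₂, −x̄₁), (t,s)). In other words, the parametrization ι_{(t,s)} restricted to the fixed locus of the twisted involution η̃ maps onto the whole conjugacy class SU(2)_{tr = t}. -/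
open Complex ComplexConjugate

theorem Matrix.exists_eq_of_unitary_of_det_eq_one {M : Matrix (Fin 2) (Fin 2) ℂ}
    (hU : star M * M = 1) (hdet : M.det = 1) :
    ∃ a b : ℂ, M = !![a, b; -conj b, conj a] ∧ normSq a + normSq b = 1 := by
  have hstar : star M = M.adjugate := by
    rw [← Matrix.inv_eq_left_inv hU, Matrix.inv_def, hdet, Ring.inverse_one, one_smul]
  rw [Matrix.adjugate_fin_two] at hstar
  have h11 : M 1 1 = conj (M 0 0) := by simpa using (congrFun₂ hstar 0 0).symm
  have h10 : M 1 0 = -conj (M 0 1) := by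
    simpa [neg_eq_iff_eq_neg] using (congrFun₂ hstar 1 0).symm
  refine ⟨M 0 0, M 0 1, ?_, ?_⟩
  · ext i j; fin_cases i <;> fin_cases j <;> simp [h11, h10]
  · rw [Matrix.det_fin_two, h11, h10] at hdet
    exact_mod_cast (by rw [← mul_conj, ← mul_conj]; linear_combination hdet :
      (normSq (M 0 0) + normSq (M 0 1) : ℂ) = 1)

theorem Matrix.exists_eq_of_unitary_of_det_eq_one_of_trace_eq {M : Matrix (Fin 2) (Fin 2) ℂ}
    {t : ℝ} (hU : star M * M = 1) (hdet : M.det = 1) (htr : M.trace = t) :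
    ∃ (α : ℝ) (b : ℂ), M = !![t / 2 + α * I, b; -conj b, t / 2 - α * I] ∧
      (t / 2) ^ 2 + α ^ 2 + normSq b = 1 := by
  obtain ⟨a, b, rfl, hab⟩ := exists_eq_of_unitary_of_det_eq_one hU hdet
  have hre : a.re = t / 2 := by
    have := congrArg re htr
    simp only [trace_fin_two_of, add_re, conj_re, ofReal_re] at this
    linarith
  refine ⟨a.im, b, ?_, ?_⟩
  · ext i j; fin_cases i <;> fin_cases j <;> apply Complex.ext <;> simp [hre]
  · rw [← hre, ← hab, normSq_apply a]; ring

theorem normSq_add_normSq_pos {x : Fin 2 → ℂ} (hx : x ≠ 0) :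
    0 < normSq (x 0) + normSq (x 1) := by
  obtain h | h : x 0 ≠ 0 ∨ x 1 ≠ 0 := by
    contrapose! hx; ext i; fin_cases i <;> simp [hx]
  · linarith [normSq_pos.2 h, normSq_nonneg (x 1)]
  · linarith [normSq_pos.2 h, normSq_nonneg (x 0)]

noncomputable def hopf (x : Fin 2 → ℂ) : ℝ × ℂ :=
  ((normSq (x 0) - normSq (x 1)) / (normSq (x 0) + normSq (x 1)),
    2 * (x 0 * conj (x 1)) / (normSq (x 0) + normSq (x 1) : ℂ))

theorem exists_ne_zero_hopf_eq {r : ℝ} {w : ℂ} (h : r ^ 2 + normSq w = 1) :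
    ∃ x : Fin 2 → ℂ, x ≠ 0 ∧ hopf x = (r, w) := by
  rcases eq_or_ne r (-1) with rfl | hr
  · have hw : w = 0 := by simpa using (by linarith : normSq w = 0)
    exact ⟨![0, 1], by simp [funext_iff], by simp [hopf, hw]⟩
  -- away from the south pole `r = -1`, `(1 + r, w̄)` is a preimage
  set x : Fin 2 → ℂ := ![((1 + r : ℝ) : ℂ), conj w]
  have h0 : normSq (x 0) = (1 + r) ^ 2 := by
    simp only [x, Matrix.cons_val_zero, normSq_ofReal]; ring
  have h1 : normSq (x 1) = 1 - r ^ 2 := by simp [x]; linarith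
  have hN : normSq (x 0) + normSq (x 1) = 2 * (1 + r) := by rw [h0, h1]; ring
  have hr' : 1 + r ≠ 0 := fun h => hr (by linarith)
  refine ⟨x, fun hx => hr' ?_, ?_⟩
  · simpa [x] using congrArg re (congrFun hx 0)
  · have hr'C : (1 + r : ℂ) ≠ 0 := by exact_mod_cast hr'
    have hNC : (normSq (x 0) + normSq (x 1) : ℂ) = 2 * (1 + r) := by exact_mod_cast hN
    ext
    · simp only [hopf, hN]; rw [h0, h1]; field_simp; ring
    · simp only [hopf, hNC]; simp [x]; field_simp

theorem Amat_antipodal (t s : ℂ) (x : Fin 2 → ℂ) :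
    Amat t s x ![conj (x 1), -conj (x 0)] =
      !![(t * (normSq (x 0) + normSq (x 1) : ℂ) + s * (normSq (x 0) - normSq (x 1) : ℂ)) / 2,
          s * (x 0 * conj (x 1));
         s * conj (x 0 * conj (x 1)),
          (t * (normSq (x 0) + normSq (x 1) : ℂ) - s * (normSq (x 0) - normSq (x 1) : ℂ)) / 2] := by
  ext i j; fin_cases i <;> fin_cases j <;> simp [Amat, ← mul_conj, -mul_eq_mul_left_iff] <;> ring

theorem inv_smul_Amat_antipodal (t s : ℂ) {x : Fin 2 → ℂ} (hx : x ≠ 0) :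
    ((normSq (x 0) + normSq (x 1) : ℝ) : ℂ)⁻¹ • Amat t s x ![conj (x 1), -conj (x 0)] =
      !![(t + s * (hopf x).1) / 2, s * (hopf x).2 / 2;
         s * conj (hopf x).2 / 2, (t - s * (hopf x).1) / 2] := by
  have hN : (normSq (x 0) + normSq (x 1) : ℂ) ≠ 0 := by
    exact_mod_cast (normSq_add_normSq_pos hx).ne'
  rw [Amat_antipodal]
  push_cast
  rw [inv_smul_eq_iff₀ hN]
  ext i j; fin_cases i <;> fin_cases j <;> simp [hopf, map_ofNat] <;> field_simp

/-- For real `t` with `|t| < 2` and `s = i√(4 − t²)`: every `M ∈ SU(2)` (unitary of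
determinant 1) with `tr M = t` is of the form
`(|x₁|² + |x₂|²)⁻¹ · A(x, (x̄₂, −x̄₁), (t,s))` for some nonzero `x ∈ ℂ²`; i.e. the
parametrization `ι_{(t,s)}` restricted to the fixed locus of the twisted involution `η̃`
maps onto the whole conjugacy class `SU(2)_{tr = t}`. -/
theorem su2_class_surjective (t : ℝ) (ht : |t| < 2) (M : Matrix (Fin 2) (Fin 2) ℂ)
    (hU : star M * M = 1) (hdet : M.det = 1) (htr : M.trace = (t : ℂ)) :
    ∃ x : Fin 2 → ℂ, x ≠ 0 ∧
      M = (((Complex.normSq (x 0) + Complex.normSq (x 1) : ℝ) : ℂ))⁻¹ •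
        Amat (t : ℂ) (Complex.I * (Real.sqrt (4 - t ^ 2) : ℂ)) x
          ![(starRingEnd ℂ) (x 1), -(starRingEnd ℂ) (x 0)] := by
  obtain ⟨α, b, rfl, hab⟩ := Matrix.exists_eq_of_unitary_of_det_eq_one_of_trace_eq hU hdet htr
  set σ := Real.sqrt (4 - t ^ 2)
  have hσ : 0 < σ := Real.sqrt_pos.mpr (by nlinarith [abs_lt.mp ht])
  have hσ2 : σ ^ 2 = 4 - t ^ 2 := Real.sq_sqrt (by nlinarith [abs_lt.mp ht])
  have hσC : (σ : ℂ) ≠ 0 := by exact_mod_cast hσ.ne'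
  obtain ⟨x, hx, hxw⟩ := exists_ne_zero_hopf_eq (r := 2 * α / σ) (w := -2 * I * b / σ) (by
    rw [normSq_div, normSq_mul, normSq_mul, normSq_ofReal]
    field_simp
    norm_num
    linear_combination 4 * hab - hσ2)
  refine ⟨x, hx, ?_⟩
  rw [inv_smul_Amat_antipodal _ _ hx, hxw]
  ext i j; fin_cases i <;> fin_cases j <;> simp [map_ofNat] <;> field_simp
  · linear_combination b * I_sq
  · linear_combination -(conj b) * I_sq
end

section
/- Let t ∈ ℝ with |t| < 2 and set y₀ = √(4 − t²). For every matrix M ∈ SL(2,ℝ) with tr(M) = t (an elliptic element), there exists x = (x₁,x₂) ∈ ℂ² with Im(x₂·x̄₁) ≠ 0 such that, writing z = x₂·x̄₁, M = (1/(2·Im z)) · [[ t·Im z − y₀·Re z, y₀·|x₁|² ], [ −y₀·|x₂|², t·Im z + y₀·Re z ]]. In other words, the parametrization ι_{(t, i·y₀)} restricted to the fixed locus of the twisted involution τ̃ (away from the diagonal) maps onto the set of all elliptic elements of SL(2,ℝ) of trace t; geometrically, every elliptic element of SL(2,ℝ) is the rotation by angle θ (with t = 2cos(θ/2)) about some fixed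 point in the upper half plane. -/
/-!
The discriminant `tr² − 4 det = (a − d)² + 4bc` of `M = !![a, b; c, d]` is negative for an
elliptic element, so `b ≠ 0`. Taking `x = (1, w)` with
`w = ((d − a) + i·y₀) / (2b)`, the `(0,1)` entry of the parametrized matrix is
`y₀ / (2 Im w) = b`, its diagonal entries have sum `t` and difference `y₀ Re w / Im w = d − a`,
and its `(1,0)` entry is `−b|w|² = c` because `(d − a)² + y₀² = −4bc` by the discriminant
identity.
-/

namespace Matrix

theorem trace_sq_sub_four_mul_det_fin_two {R : Type*} [CommRing R]
    (M : Matrix (Fin 2) (Fin 2) R) :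
    M.trace ^ 2 - 4 * M.det = (M 0 0 - M 1 1) ^ 2 + 4 * (M 0 1 * M 1 0) := by
  rw [trace_fin_two, det_fin_two]
  ring

theorem apply_zero_one_ne_zero_of_trace_sq_lt {R : Type*} [CommRing R] [LinearOrder R]
    [IsStrictOrderedRing R] {M : Matrix (Fin 2) (Fin 2) R} (h : M.trace ^ 2 < 4 * M.det) :
    M 0 1 ≠ 0 := by
  intro hb
  have hdisc := M.trace_sq_sub_four_mul_det_fin_two
  rw [hb, zero_mul, mul_zero, add_zero] at hdisc
  nlinarith [sq_nonneg (M 0 0 - M 1 1)]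

end Matrix

open Complex

noncomputable def ellipticPoint (M : Matrix (Fin 2) (Fin 2) ℝ) (y : ℝ) : ℂ :=
  ⟨(M 1 1 - M 0 0) / (2 * M 0 1), y / (2 * M 0 1)⟩

section ellipticPoint

variable {M : Matrix (Fin 2) (Fin 2) ℝ} {y : ℝ}

theorem ellipticPoint_im_ne_zero (hy : y ≠ 0) (hb : M 0 1 ≠ 0) : (ellipticPoint M y).im ≠ 0 :=
  div_ne_zero hy (mul_ne_zero two_ne_zero hb)

theorem normSq_ellipticPoint (hy : y ^ 2 = 4 * M.det - M.trace ^ 2) (hb : M 0 1 ≠ 0) :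
    normSq (ellipticPoint M y) = -(M 1 0 / M 0 1) := by
  have hdisc := M.trace_sq_sub_four_mul_det_fin_two
  rw [ellipticPoint, normSq_mk]
  field_simp
  linear_combination hy - hdisc

theorem eq_smul_ellipticPoint {t : ℝ} (hdet : M.det = 1) (htr : M.trace = t)
    (hy : y ^ 2 = 4 - t ^ 2) (hy0 : y ≠ 0) (hb : M 0 1 ≠ 0) :
    M = (1 / (2 * (ellipticPoint M y).im)) •
      !![t * (ellipticPoint M y).im - y * (ellipticPoint M y).re, y;
        -(y * normSq (ellipticPoint M y)),
        t * (ellipticPoint M y).im + y * (ellipticPoint M y).re] := by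
  have hnormSq := normSq_ellipticPoint (by rw [hdet, htr]; linarith) hb
  rw [Matrix.trace_fin_two] at htr
  rw [hnormSq]
  ext i j
  fin_cases i <;> fin_cases j <;>
    simp only [Fin.zero_eta, Fin.mk_one, Fin.isValue, ellipticPoint, one_div, mul_inv_rev,
      inv_div, mul_neg, neg_neg, Matrix.smul_apply, Matrix.of_apply, Matrix.cons_val',
      Matrix.cons_val_zero, Matrix.cons_val_one, Matrix.cons_val_fin_one, smul_eq_mul] <;>
    field_simp <;> linear_combination htr

end ellipticPoint

/-- For real `t` with `|t| < 2` and `y₀ = √(4 − t²)`: every elliptic `M ∈ SL(2,ℝ)` with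
`tr M = t` is of the form
`(1/(2·Im z)) · [[t·Im z − y₀·Re z, y₀·|x₁|²], [−y₀·|x₂|², t·Im z + y₀·Re z]]`
for some `x = (x₁,x₂) ∈ ℂ²` with `z = x₂·x̄₁` satisfying `Im z ≠ 0`; i.e. the
parametrization `ι_{(t, i·y₀)}` restricted to the fixed locus of the twisted involution
`τ̃` (away from the diagonal) maps onto the set of all elliptic elements of `SL(2,ℝ)` of
trace `t`. -/
theorem sl2R_elliptic_class_surjective (t : ℝ) (ht : |t| < 2)
    (M : Matrix (Fin 2) (Fin 2) ℝ) (hdet : M.det = 1) (htr : M.trace = t) :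
    ∃ x : Fin 2 → ℂ,
      (x 1 * (starRingEnd ℂ) (x 0)).im ≠ 0 ∧
      M = (1 / (2 * (x 1 * (starRingEnd ℂ) (x 0)).im)) •
        !![t * (x 1 * (starRingEnd ℂ) (x 0)).im -
              Real.sqrt (4 - t ^ 2) * (x 1 * (starRingEnd ℂ) (x 0)).re,
            Real.sqrt (4 - t ^ 2) * Complex.normSq (x 0);
            -(Real.sqrt (4 - t ^ 2) * Complex.normSq (x 1)),
            t * (x 1 * (starRingEnd ℂ) (x 0)).im +
              Real.sqrt (4 - t ^ 2) * (x 1 * (starRingEnd ℂ) (x 0)).re] := by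
  have ht2 : t ^ 2 < 2 ^ 2 := sq_lt_sq' (abs_lt.1 ht).1 (abs_lt.1 ht).2
  have hy : 0 < √(4 - t ^ 2) := Real.sqrt_pos.2 (by linarith)
  have hy2 : √(4 - t ^ 2) ^ 2 = 4 - t ^ 2 := Real.sq_sqrt (by linarith)
  have hb : M 0 1 ≠ 0 :=
    Matrix.apply_zero_one_ne_zero_of_trace_sq_lt (by rw [hdet, htr]; linarith)
  refine ⟨![1, ellipticPoint M √(4 - t ^ 2)], ?_, ?_⟩
  · simpa using ellipticPoint_im_ne_zero hy.ne' hb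
  · simpa using eq_smul_ellipticPoint hdet htr hy2 hy.ne' hb
end
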